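/- Let G be a finite group with a normal subgroup N = KH where K is a normal abelian p-subgroup of G, H is a p'-Hall subgroup of N, and C_K(H) = 1. Then N_G(H) is a complement to K in G, i.e., G = K·N_G(H) and K ∩ N_G(H) = 1. -/

import Mathlib

noncomputable section
open scoped Classical

/-- `χ` is an irreducible (complex) character of the finite group `H`. -/
def IsIrrChar (H : Type) [Group H] (χ : H → ℂ) : Prop :=
  ∃ V : FDRep ℂ H, CategoryTheory.Simple V ∧ χ = V.character

/-- The usual inner product of class functions on `H`. -/
def charInner (H : Type) [Group H] (χ θ : H → ℂ) : ℂ :=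
  (Nat.card H : ℂ)⁻¹ * ∑ᶠ h : H, χ h * (starRingEnd ℂ) (θ h)

/-- `θ` is an irreducible constituent of the character `χ`. -/
def IsConstituent (H : Type) [Group H] (χ θ : H → ℂ) : Prop :=
  IsIrrChar H θ ∧ charInner H χ θ ≠ 0

variable {G : Type}

/-- Restriction of a character of `A` to a subgroup `B ≤ A`. -/
def resSub [Group G] {A B : Subgroup G} (h : B ≤ A) (χ : ↥A → ℂ) : ↥B → ℂ :=
  fun b => χ ⟨b, h b.2⟩

/-- Restriction of a character of `G` to a subgroup `B`. -/
def resTop [Group G] (B : Subgroup G) (χ : G → ℂ) : ↥B → ℂ := fun b => χ b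

/-- The induced character from `B ≤ A`. -/
def indSub [Group G] {A B : Subgroup G} (_h : B ≤ A) (φ : ↥B → ℂ) : ↥A → ℂ :=
  fun a => (Nat.card ↥B : ℂ)⁻¹ *
    ∑ᶠ x : ↥A, if hx : ((x : G) * a * (x : G)⁻¹) ∈ B then φ ⟨_, hx⟩ else 0

/-- `χ`, a character of `M ≤ G`, is invariant under conjugation by elements of `C`. -/
def ConjInv [Group G] (C M : Subgroup G) (χ : ↥M → ℂ) : Prop :=
  ∀ c ∈ C, ∀ m : ↥M, ∀ hm : c * (m : G) * c⁻¹ ∈ M, χ ⟨c * m * c⁻¹, hm⟩ = χ m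

/-- `χ`, a character of `M ≤ G`, is `G`-invariant. -/
def GInv [Group G] (M : Subgroup G) (χ : ↥M → ℂ) : Prop :=
  ∀ g : G, ∀ m : ↥M, ∀ hm : g * (m : G) * g⁻¹ ∈ M, χ ⟨g * m * g⁻¹, hm⟩ = χ m

/-- The field of values `ℚ(χ)` of a character, as a subfield of `ℂ`. -/
def fieldOfValues (H : Type) (χ : H → ℂ) : Subfield ℂ := Subfield.closure (Set.range χ)

/-- The `n`-th cyclotomic field `ℚ_n` inside `ℂ`. -/
def cycSubfield (n : ℕ) : Subfield ℂ := Subfield.closure {x : ℂ | x ^ n = 1}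

/-- `K` is the smallest normal subgroup of `G` with nilpotent quotient. -/
def NilpotentResidual [Group G] (K : Subgroup G) (hK : K.Normal) : Prop :=
  (letI := hK; Group.IsNilpotent (G ⧸ K)) ∧
    ∀ N : Subgroup G, (hN : N.Normal) → (letI := hN; Group.IsNilpotent (G ⧸ N)) → K ≤ N

/-- A Carter subgroup: a self-normalizing nilpotent subgroup. -/
def IsCarter [Group G] (C : Subgroup G) : Prop :=
  Group.IsNilpotent ↥C ∧ Subgroup.normalizer (C : Set G) = C

/-- A linear character, i.e. a multiplicative homomorphism to `ℂ`. -/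
def IsLinChar (H : Type) [Group H] (χ : H → ℂ) : Prop :=
  ∃ l : H →* ℂ, χ = ⇑l

/-- `Ext(G|θ)`: irreducible characters of `G` restricting to `θ` on `K`. -/
def ExtSet [Group G] (K : Subgroup G) (θ : ↥K → ℂ) : Set (G → ℂ) :=
  {χ | IsIrrChar G χ ∧ resTop K χ = θ}

/-- `Ext(A|φ)` for subgroups `B ≤ A` of `G`. -/
def ExtSub [Group G] {A B : Subgroup G} (h : B ≤ A) (φ : ↥B → ℂ) : Set (↥A → ℂ) :=
  {χ | IsIrrChar ↥A χ ∧ resSub h χ = φ}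


/-- The character of `G` induced from a character of the subgroup `B`. -/
def indTop [Group G] (B : Subgroup G) (φ : ↥B → ℂ) : G → ℂ :=
  fun g => (Nat.card ↥B : ℂ)⁻¹ *
    ∑ᶠ x : G, if hx : (x * g * x⁻¹) ∈ B then φ ⟨_, hx⟩ else 0

/-!
As `|K|` and `|H|` are coprime, `H` is a complement of the abelian normal subgroup `K` in `N = KH`,
and by the abelian case of Schur–Zassenhaus all complements of `K` in `N` are `K`-conjugate.
For `g ∈ G` the conjugate `H^g` is again such a complement, so `H^g = H^k` with `k ∈ K` and
`k⁻¹g` normalizes `H` (the Frattini argument); hence `G = K N_G(H)`. An element `x ∈ K`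
normalizing `H` has `[x, h] ∈ K ∩ H = 1` for all `h ∈ H`, so `K ∩ N_G(H) ≤ C_K(H) = 1`.
-/

open MulAction Pointwise ConjAct

namespace Subgroup

variable {G : Type*} [Group G]

theorem map_toConjAct_smul {G' : Type*} [Group G'] (f : G →* G') (x : G) (H : Subgroup G) :
    (toConjAct x • H).map f = toConjAct (f x) • H.map f := by
  change (H.map (MulAut.conj x).toMonoidHom).map f = (H.map f).map (MulAut.conj (f x)).toMonoidHom
  rw [map_map, map_map]
  congr 1
  ext
  simp

theorem isComplement'_subgroupOf_sup {A C : Subgroup G} [A.Normal] (h : Disjoint A C) :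
    IsComplement' (A.subgroupOf (A ⊔ C)) (C.subgroupOf (A ⊔ C)) := by
  refine isComplement'_of_disjoint_and_mul_eq_univ ?_ ?_
  · exact disjoint_def.mpr fun hA hC => Subtype.ext (disjoint_def.mp h hA hC)
  · refine Set.eq_univ_iff_forall.mpr fun ⟨x, hx⟩ => ?_
    obtain ⟨a, ha, c, hc, rfl⟩ := mem_sup_of_normal_left.mp hx
    exact ⟨⟨a, mem_sup_left ha⟩, ha, ⟨c, mem_sup_right hc⟩, hc, rfl⟩

theorem inf_normalizer_le_centralizer {A C : Subgroup G} [A.Normal] (h : Disjoint A C) :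
    A ⊓ normalizer (C : Set G) ≤ centralizer (C : Set G) := by
  rintro x ⟨hxA, hxN⟩ c hc
  have hA : x * (c * x⁻¹ * c⁻¹) ∈ A :=
    mul_mem hxA (‹A.Normal›.conj_mem x⁻¹ (inv_mem hxA) c)
  have hC : x * c * x⁻¹ * c⁻¹ ∈ C := mul_mem ((mem_normalizer_iff.mp hxN c).mp hc) (inv_mem hc)
  have h1 : x * c * x⁻¹ * c⁻¹ = 1 := disjoint_def.mp h (by simpa only [mul_assoc] using hA) hC
  rw [mul_inv_eq_one, mul_inv_eq_iff_eq_mul] at h1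
  exact h1.symm

section AbelianNormal

variable [Finite G] {A : Subgroup G} [A.Normal] [IsMulCommutative A]

/-- A complement of `A` is a left transversal of `A`; `A.QuotientDiff` is the set of transversals up
to the equivalence of the abelian Schur–Zassenhaus theorem, on which `A` acts regularly when
`|A|` is coprime to its index. -/
noncomputable def IsComplement'.toQuotientDiff {C : Subgroup G} (hC : IsComplement' A C) :
    A.QuotientDiff :=
  Quotient.mk'' ⟨C, isComplement'_def.mp hC.symm⟩

theorem IsComplement'.stabilizer_toQuotientDiff (hcop : (Nat.card A).Coprime A.index)
    {C : Subgroup G} (hC : IsComplement' A C) : stabilizer G hC.toQuotientDiff = C := by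
  have hle : C ≤ stabilizer G hC.toQuotientDiff := fun g hg =>
    congrArg Quotient.mk'' (Subtype.ext (op_smul_coe_set (inv_mem hg) :))
  refine (eq_of_le_of_card_ge hle (le_of_eq ?_)).symm
  exact (isComplement'_stabilizer_of_coprime hcop).symm.index_eq_card.symm.trans
    hC.symm.index_eq_card

theorem exists_toConjAct_smul_eq_of_isComplement' (hcop : (Nat.card A).Coprime A.index)
    {C₁ C₂ : Subgroup G} (h₁ : IsComplement' A C₁) (h₂ : IsComplement' A C₂) :
    ∃ a ∈ A, toConjAct a • C₁ = C₂ := by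
  obtain ⟨a, ha⟩ := exists_smul_eq hcop h₁.toQuotientDiff h₂.toQuotientDiff
  refine ⟨a, a.2, ?_⟩
  rw [← h₂.stabilizer_toQuotientDiff hcop, ← ha]
  nth_rw 1 [← h₁.stabilizer_toQuotientDiff hcop]
  exact (stabilizer_smul_eq_stabilizer_map_conj (a : G) _).symm

theorem exists_toConjAct_smul_eq_of_disjoint {C₁ C₂ : Subgroup G}
    (hcop : (Nat.card A).Coprime (Nat.card C₁)) (h₁ : Disjoint A C₁) (h₂ : Disjoint A C₂)
    (hsup : A ⊔ C₂ = A ⊔ C₁) : ∃ a ∈ A, toConjAct a • C₁ = C₂ := by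
  set N := A ⊔ C₁
  have hC₁ := isComplement'_subgroupOf_sup h₁
  have hC₂ : IsComplement' (A.subgroupOf N) (C₂.subgroupOf N) :=
    hsup ▸ isComplement'_subgroupOf_sup h₂
  have hcop' : (Nat.card (A.subgroupOf N)).Coprime (A.subgroupOf N).index := by
    rwa [hC₁.symm.index_eq_card, Nat.card_congr (subgroupOfEquivOfLe le_sup_left).toEquiv,
      Nat.card_congr (subgroupOfEquivOfLe (le_sup_right : C₁ ≤ N)).toEquiv]
  obtain ⟨a, ha, hconj⟩ := exists_toConjAct_smul_eq_of_isComplement' hcop' hC₁ hC₂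
  refine ⟨a, ha, ?_⟩
  have := congrArg (map N.subtype) hconj
  rwa [map_toConjAct_smul, map_subgroupOf_eq_of_le le_sup_right,
    map_subgroupOf_eq_of_le (hsup ▸ le_sup_right)] at this

theorem sup_normalizer_eq_top_of_coprime {C : Subgroup G}
    (hcop : (Nat.card A).Coprime (Nat.card C)) (hN : (A ⊔ C).Normal) :
    A ⊔ normalizer (C : Set G) = ⊤ := by
  refine eq_top_iff' _ |>.mpr fun g => ?_
  have hdisj := disjoint_of_coprime_natCard hcop
  have hdisj' : Disjoint A (toConjAct g • C) := by
    rw [disjoint_iff, ← ‹A.Normal›.conjAct (toConjAct g), ← smul_inf, disjoint_iff.mp hdisj,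
      smul_bot]
  have hsup : A ⊔ toConjAct g • C = A ⊔ C := by
    nth_rw 1 [← ‹A.Normal›.conjAct (toConjAct g)]
    rw [← smul_sup, hN.conjAct]
  obtain ⟨a, ha, hconj⟩ := exists_toConjAct_smul_eq_of_disjoint hcop hdisj hdisj' hsup
  have hnorm : a⁻¹ * g ∈ normalizer (C : Set G) := by
    rw [← conjAct_pointwise_smul_iff, toConjAct_mul, mul_smul, ← hconj, ← mul_smul,
      ← toConjAct_mul, inv_mul_cancel, toConjAct_one, one_smul]
  simpa using mul_mem_sup ha hnorm

end AbelianNormal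

end Subgroup

open Subgroup in
theorem stmt4_general (G : Type) [Group G] [Fintype G] (p : ℕ) [Fact p.Prime]
    (K H : Subgroup G) (hKn : K.Normal) (hKp : IsPGroup p ↥K)
    (hab : ∀ x y : ↥K, x * y = y * x)
    (hNn : (K ⊔ H).Normal)
    (hHp' : ¬ p ∣ Nat.card ↥H)
    (hcent : K ⊓ Subgroup.centralizer (H : Set G) = ⊥) :
    K ⊔ Subgroup.normalizer (H : Set G) = ⊤ ∧ K ⊓ Subgroup.normalizer (H : Set G) = ⊥ := by
  have : IsMulCommutative K := ⟨⟨hab⟩⟩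
  have hcop : (Nat.card K).Coprime (Nat.card H) := by
    obtain ⟨n, hn⟩ := IsPGroup.iff_card.mp hKp
    rw [hn]
    exact ((Nat.Prime.coprime_iff_not_dvd Fact.out).mpr hHp').pow_left n
  refine ⟨sup_normalizer_eq_top_of_coprime hcop hNn, eq_bot_iff.mpr ?_⟩
  rw [← hcent]
  exact le_inf inf_le_left (inf_normalizer_le_centralizer (disjoint_of_coprime_natCard hcop))

theorem stmt4 (G : Type) [Group G] [Fintype G] (p : ℕ) [Fact p.Prime]
    (K H : Subgroup G) (hKn : K.Normal) (hKp : IsPGroup p ↥K)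
    (hab : ∀ x y : ↥K, x * y = y * x)
    (hNn : (K ⊔ H).Normal)
    (hHp' : ¬ p ∣ Nat.card ↥H)
    (hHall : ∃ n : ℕ, Nat.card ↥(K ⊔ H) = Nat.card ↥H * p ^ n)
    (hcent : K ⊓ Subgroup.centralizer (H : Set G) = ⊥) :
    K ⊔ Subgroup.normalizer (H : Set G) = ⊤ ∧ K ⊓ Subgroup.normalizer (H : Set G) = ⊥ :=
  stmt4_general G p K H hKn hKp hab hNn hHp' hcent

end
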